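/- arXiv:2605.17105 — 7 statements merged into one kernel-verified Lean document; each statement's English description precedes it below -/
import Mathlib

section
/- Fix positive integers m and n. Define ρ(x) = ((m+n)!/(πⁿ m!)) · (1 + e^{2x₁} + ⋯ + e^{2xₙ})^{-(m+n+1)} for x ∈ ℝⁿ. Then for every multi-index α ∈ ℕⁿ with |α| ≤ m, ∫_{ℝⁿ} ρ(x) e^{2⟨α+𝟏,x⟩} dx = (1/(2π)ⁿ) · α!(m−|α|)!/m!. -/
/-!
After the rescaling `x ↦ 2x` the integrand is `e^{⟨α+𝟏,x⟩} (c + Σⱼ e^{xⱼ})^{-p}` with `c = 1`.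
Integrating out all coordinates but `x₀` gives, by induction on the dimension, a multiple of
`e^{(α₀+1)x₀} (c + e^{x₀})^{-(α₀+b+2)}`, and the logistic substitution
`u = e^{x₀}/(c + e^{x₀})` turns the integral of that into the Beta integral
`c^{-(b+1)} ∫₀¹ u^{α₀} (1-u)^b du = c^{-(b+1)} α₀! b!/(α₀+b+1)!`.
-/

open MeasureTheory Real Set Nat

theorem integral_pow_mul_one_sub_pow (a b : ℕ) :
    ∫ x in (0 : ℝ)..1, x ^ a * (1 - x) ^ b = (a ! * b ! : ℝ) / (a + b + 1)! := by
  induction b generalizing a with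
  | zero =>
    simp only [pow_zero, mul_one, integral_pow, factorial_zero, Nat.cast_one, add_zero,
      factorial_succ a]
    push_cast
    field_simp
    simp
  | succ b ih =>
    have hsplit (x : ℝ) :
        x ^ a * (1 - x) ^ (b + 1) = x ^ a * (1 - x) ^ b - x ^ (a + 1) * (1 - x) ^ b := by
      ring
    simp_rw [hsplit]
    rw [intervalIntegral.integral_sub (Continuous.intervalIntegrable (by fun_prop) _ _)
      (Continuous.intervalIntegrable (by fun_prop) _ _), ih, ih,
      show a + 1 + b + 1 = a + (b + 1) + 1 by ring, factorial_succ (a + (b + 1)),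
      show a + (b + 1) = a + b + 1 by ring, factorial_succ a, factorial_succ b]
    push_cast
    field_simp
    ring

section SigmoidSubstitution

theorem hasDerivAt_sigmoid_sub (a t : ℝ) :
    HasDerivAt (fun t => sigmoid (t - a)) (sigmoid (t - a) * (1 - sigmoid (t - a))) t :=
  (hasDerivAt_sigmoid (t - a)).comp_sub_const t a

theorem image_univ_sigmoid_sub (a : ℝ) : (fun t => sigmoid (t - a)) '' univ = Ioo 0 1 := by
  rw [image_univ, ← range_sigmoid]
  exact (Equiv.subRight a).surjective.range_comp sigmoid

theorem integrableOn_Ioo_iff_integrable_sigmoid_sub {g : ℝ → ℝ} (a : ℝ) :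
    IntegrableOn g (Ioo 0 1) ↔
      Integrable (fun t => |sigmoid (t - a) * (1 - sigmoid (t - a))| • g (sigmoid (t - a))) := by
  rw [← image_univ_sigmoid_sub a, integrableOn_image_iff_integrableOn_abs_deriv_smul
    MeasurableSet.univ (fun t _ => (hasDerivAt_sigmoid_sub a t).hasDerivWithinAt)
    (sigmoid_injective.comp sub_left_injective).injOn, integrableOn_univ]

theorem integral_Ioo_eq_integral_sigmoid_sub (g : ℝ → ℝ) (a : ℝ) :
    ∫ u in Ioo 0 1, g u =
      ∫ t, |sigmoid (t - a) * (1 - sigmoid (t - a))| • g (sigmoid (t - a)) := by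
  rw [← image_univ_sigmoid_sub a, integral_image_eq_integral_abs_deriv_smul
    MeasurableSet.univ (fun t _ => (hasDerivAt_sigmoid_sub a t).hasDerivWithinAt)
    (sigmoid_injective.comp sub_left_injective).injOn, setIntegral_univ]

variable {c : ℝ}

theorem sigmoid_sub_log (hc : 0 < c) (t : ℝ) : sigmoid (t - log c) = exp t / (c + exp t) := by
  rw [sigmoid_def, neg_sub, exp_sub, exp_log hc]
  field_simp
  ring

theorem one_sub_sigmoid_sub_log (hc : 0 < c) (t : ℝ) :
    1 - sigmoid (t - log c) = c / (c + exp t) := by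
  rw [sigmoid_sub_log hc]
  field_simp
  ring

theorem abs_deriv_smul_beta_sigmoid_sub_log (hc : 0 < c) (k b : ℕ) (t : ℝ) :
    |sigmoid (t - log c) * (1 - sigmoid (t - log c))| •
        (sigmoid (t - log c) ^ k * (1 - sigmoid (t - log c)) ^ b)
      = c ^ (b + 1) * (exp ((k + 1) * t) / (c + exp t) ^ (k + b + 2)) := by
  rw [one_sub_sigmoid_sub_log hc, sigmoid_sub_log hc, smul_eq_mul, abs_of_pos (by positivity),
    show ((k : ℝ) + 1) * t = (k + 1 : ℕ) * t by push_cast; ring, exp_nat_mul, div_pow, div_pow]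
  field_simp
  ring

theorem integrable_exp_mul_div_add_exp_pow (hc : 0 < c) (k b : ℕ) :
    Integrable (fun t => exp ((k + 1) * t) / (c + exp t) ^ (k + b + 2)) := by
  have hbeta : IntegrableOn (fun u : ℝ => u ^ k * (1 - u) ^ b) (Ioo 0 1) :=
    (Continuous.integrableOn_Icc (by fun_prop)).mono_set Ioo_subset_Icc_self
  rw [integrableOn_Ioo_iff_integrable_sigmoid_sub (log c)] at hbeta
  simp_rw [abs_deriv_smul_beta_sigmoid_sub_log hc] at hbeta
  exact (integrable_const_mul_iff (by positivity : 0 < c ^ (b + 1)).ne'.isUnit _).1 hbeta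

theorem integral_exp_mul_div_add_exp_pow (hc : 0 < c) (k b : ℕ) :
    ∫ t, exp ((k + 1) * t) / (c + exp t) ^ (k + b + 2)
      = k ! * b ! / ((k + b + 1)! * c ^ (b + 1)) := by
  have hbeta := integral_pow_mul_one_sub_pow k b
  rw [intervalIntegral.integral_of_le zero_le_one, integral_Ioc_eq_integral_Ioo,
    integral_Ioo_eq_integral_sigmoid_sub _ (log c)] at hbeta
  simp_rw [abs_deriv_smul_beta_sigmoid_sub_log hc, integral_const_mul] at hbeta
  rw [eq_div_iff (by positivity)] at hbeta
  rw [eq_div_iff (by positivity), ← hbeta]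
  ring

end SigmoidSubstitution

section FinCons

variable {E G : Type*} {n : ℕ}

theorem coe_piFinSuccAbove_zero_symm [MeasurableSpace E] :
    ⇑(MeasurableEquiv.piFinSuccAbove (fun _ : Fin (n + 1) => E) 0).symm
      = fun z => Fin.cons z.1 z.2 := by
  ext z
  simp [MeasurableEquiv.piFinSuccAbove_symm_apply, Fin.insertNthEquiv]

theorem measurable_finCons [MeasurableSpace E] :
    Measurable fun z : E × (Fin n → E) => (Fin.cons z.1 z.2 : Fin (n + 1) → E) :=
  coe_piFinSuccAbove_zero_symm (E := E) ▸
    (MeasurableEquiv.piFinSuccAbove (fun _ : Fin (n + 1) => E) 0).symm.measurable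

variable [MeasureSpace E] [SigmaFinite (volume : Measure E)] [NormedAddCommGroup G]

theorem integrable_comp_finCons_iff {f : (Fin (n + 1) → E) → G} :
    Integrable (fun z : E × (Fin n → E) => f (Fin.cons z.1 z.2)) ↔ Integrable f := by
  have h := (volume_preserving_piFinSuccAbove (fun _ : Fin (n + 1) => E) 0).symm
    |>.integrable_comp_emb (MeasurableEquiv.measurableEmbedding _) (g := f)
  rwa [coe_piFinSuccAbove_zero_symm] at h

theorem integral_comp_finCons [NormedSpace ℝ G] (f : (Fin (n + 1) → E) → G) :
    ∫ z : E × (Fin n → E), f (Fin.cons z.1 z.2) = ∫ x, f x := by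
  have h := (volume_preserving_piFinSuccAbove (fun _ : Fin (n + 1) => E) 0).symm.integral_comp' f
  rwa [coe_piFinSuccAbove_zero_symm] at h

end FinCons

noncomputable def momentKernel (c : ℝ) (p : ℕ) {n : ℕ} (α : Fin n → ℕ) (x : Fin n → ℝ) : ℝ :=
  exp (∑ j, ((α j : ℝ) + 1) * x j) / (c + ∑ j, exp (x j)) ^ p

section MomentKernel

variable {c : ℝ} {n : ℕ}

theorem measurable_momentKernel (c : ℝ) (p : ℕ) (α : Fin n → ℕ) :
    Measurable (momentKernel c p α) := by
  unfold momentKernel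
  fun_prop

theorem momentKernel_nonneg (hc : 0 < c) (p : ℕ) (α : Fin n → ℕ) (x : Fin n → ℝ) :
    0 ≤ momentKernel c p α x := by
  unfold momentKernel
  positivity

theorem momentKernel_cons (c : ℝ) (p : ℕ) (α : Fin (n + 1) → ℕ) (t : ℝ) (y : Fin n → ℝ) :
    momentKernel c p α (Fin.cons t y)
      = exp ((α 0 + 1) * t) * momentKernel (c + exp t) p (Fin.tail α) y := by
  simp only [momentKernel, Fin.sum_univ_succ, Fin.cons_zero, Fin.cons_succ, Fin.tail, exp_add,
    add_assoc]
  ring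

-- Writing the exponent as `|α| + n + 1 + b` avoids truncated subtraction.
theorem integrable_momentKernel_and_integral_eq (hc : 0 < c) (α : Fin n → ℕ) (b : ℕ) :
    Integrable (momentKernel c (∑ j, α j + n + 1 + b) α) ∧
      ∫ x, momentKernel c (∑ j, α j + n + 1 + b) α x
        = (∏ j, ((α j)! : ℝ)) * b ! / ((∑ j, α j + n + b)! * c ^ (b + 1)) := by
  induction n generalizing c b with
  | zero =>
    refine ⟨.of_finite, ?_⟩
    simp [momentKernel, volume_pi, Measure.real, add_comm 1 b, ← div_div, factorial_ne_zero]
  | succ n ih =>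
    set p := ∑ j, α j + (n + 1) + 1 + b
    have hp : p = ∑ j, Fin.tail α j + n + 1 + (α 0 + 1 + b) := by
      simp only [p, Fin.sum_univ_succ, Fin.tail]
      ring
    set C : ℝ := (∏ j, ((Fin.tail α j)! : ℝ)) * (α 0 + 1 + b)! / (∑ j, α j + (n + 1) + b)!
    have hfiber (t : ℝ) :
        Integrable (fun y => momentKernel c p α (Fin.cons t y)) ∧
          ∫ y, momentKernel c p α (Fin.cons t y)
            = C * (exp ((α 0 + 1) * t) / (c + exp t) ^ (α 0 + b + 2)) := by
      obtain ⟨hint, heq⟩ := ih (c := c + exp t) (by positivity) (Fin.tail α) (α 0 + 1 + b)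
      simp_rw [momentKernel_cons, ← hp] at hint heq ⊢
      refine ⟨hint.const_mul _, ?_⟩
      rw [integral_const_mul, heq, show ∑ j, Fin.tail α j + n + (α 0 + 1 + b)
        = ∑ j, α j + (n + 1) + b by simp only [Fin.sum_univ_succ, Fin.tail]; ring]
      simp only [C]
      field_simp
      ring
    have hprod : Integrable fun z : ℝ × (Fin n → ℝ) => momentKernel c p α (Fin.cons z.1 z.2) := by
      refine (integrable_prod_iff ((measurable_momentKernel c p α).comp
        measurable_finCons).aestronglyMeasurable).2 ⟨.of_forall fun t => (hfiber t).1, ?_⟩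
      simp_rw [Function.comp_apply, Real.norm_of_nonneg (momentKernel_nonneg hc _ _ _),
        (hfiber _).2]
      exact (integrable_exp_mul_div_add_exp_pow hc _ _).const_mul C
    refine ⟨integrable_comp_finCons_iff.1 hprod, ?_⟩
    rw [← integral_comp_finCons, Measure.volume_eq_prod, integral_prod _ hprod]
    simp_rw [(hfiber _).2]
    rw [integral_const_mul, integral_exp_mul_div_add_exp_pow hc]
    simp only [C, Fin.prod_univ_succ, Fin.tail, show α 0 + 1 + b = α 0 + b + 1 by ring]
    field_simp

end MomentKernel

theorem stmt2_general (m n : ℕ) (α : Fin n → ℕ) (hα : ∑ j, α j ≤ m) :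
    (∫ x : Fin n → ℝ,
      (((m + n).factorial : ℝ) / (π ^ n * (m.factorial : ℝ)) /
          (1 + ∑ j, Real.exp (2 * x j)) ^ (m + n + 1)) *
        Real.exp (2 * ∑ j, ((α j : ℝ) + 1) * x j))
    = (1 / (2 * π) ^ n) *
        ((∏ j, ((α j).factorial : ℝ)) * ((m - ∑ j, α j).factorial : ℝ)
          / (m.factorial : ℝ)) := by
  obtain ⟨b, rfl⟩ := Nat.exists_eq_add_of_le hα
  have hkernel (x : Fin n → ℝ) :
      ((∑ j, α j + b + n)! : ℝ) / (π ^ n * (∑ j, α j + b)!) /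
          (1 + ∑ j, exp (2 * x j)) ^ (∑ j, α j + b + n + 1) * exp (2 * ∑ j, ((α j : ℝ) + 1) * x j)
        = (∑ j, α j + b + n)! / (π ^ n * (∑ j, α j + b)!) *
            momentKernel 1 (∑ j, α j + n + 1 + b) α ((2 : ℝ) • x) := by
    simp only [momentKernel, Pi.smul_apply, smul_eq_mul, Finset.mul_sum, mul_left_comm _ (2 : ℝ),
      show ∑ j, α j + b + n + 1 = ∑ j, α j + n + 1 + b by ring]
    ring
  simp_rw [hkernel]
  rw [integral_const_mul, Measure.integral_comp_smul, Module.finrank_fin_fun,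
    (integrable_momentKernel_and_integral_eq one_pos α b).2, Nat.add_sub_cancel_left,
    add_right_comm _ n b, abs_of_pos (by positivity), smul_eq_mul, one_pow, mul_pow]
  field_simp

/-- With `ρ(x) = ((m+n)!/(πⁿ m!)) (1 + Σⱼ e^{2xⱼ})^{-(m+n+1)}`, for every
multi-index `α ∈ ℕⁿ` with `|α| ≤ m`,
`∫_{ℝⁿ} ρ(x) e^{2⟨α+𝟏,x⟩} dx = (2π)^{-n} α! (m−|α|)!/m!`. -/
theorem stmt2 (m n : ℕ) (hm : 0 < m) (hn : 0 < n)
    (α : Fin n → ℕ) (hα : ∑ j, α j ≤ m) :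
    (∫ x : Fin n → ℝ,
      (((m + n).factorial : ℝ) / (π ^ n * (m.factorial : ℝ)) /
          (1 + ∑ j, Real.exp (2 * x j)) ^ (m + n + 1)) *
        Real.exp (2 * ∑ j, ((α j : ℝ) + 1) * x j))
    = (1 / (2 * π) ^ n) *
        ((∏ j, ((α j).factorial : ℝ)) * ((m - ∑ j, α j).factorial : ℝ)
          / (m.factorial : ℝ)) :=
  stmt2_general m n α hα
end

section
/- Fix positive integers m and n. Let 𝓘_m = {α ∈ ℕⁿ : |α| ≤ m}, N = #𝓘_m, and for x ∈ ℝⁿ let v(x) = (e^{2⟨α+𝟏,x⟩})_{α∈𝓘_m} ∈ ℝᴺ. Let A = (A_α)_{α∈𝓘_m} ∈ ℝᴺ with A_α = (1/(2π)ⁿ) · α!(m−|α|)!/m!, and let K_v = cone({v(x) : x ∈ ℝⁿ}) be the set of all finite sums Σᵢ aᵢ v(xᵢ) with aᵢ ≥ 0 and xᵢ ∈ ℝⁿ. Then A lies in the interior of K_v in ℝᴺ. -/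
open Real

/-- The index set `𝓘_m = {α ∈ ℕⁿ : |α| ≤ m}`. -/
def IndexSet (m n : ℕ) : Type := {α : Fin n → ℕ // ∑ j, α j ≤ m}

/-- The moment-vector map `v(x) = (e^{2⟨α+𝟏,x⟩})_{α ∈ 𝓘_m}`. -/
noncomputable def vMap (m n : ℕ) (x : Fin n → ℝ) : IndexSet m n → ℝ :=
  fun α => Real.exp (2 * ∑ j, ((α.1 j : ℝ) + 1) * x j)

/-- The target moment data `A = (A_α)_{α ∈ 𝓘_m}`, `A_α = (2π)^{-n} α!(m−|α|)!/m!`. -/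
noncomputable def AVec (m n : ℕ) : IndexSet m n → ℝ :=
  fun α => (1 / (2 * π) ^ n) *
    ((∏ j, ((α.1 j).factorial : ℝ)) * ((m - ∑ j, α.1 j).factorial : ℝ)
      / (m.factorial : ℝ))

/-- The cone generated by `{v(x) : x ∈ ℝⁿ}`: all finite nonnegative combinations. -/
def coneV (m n : ℕ) : Set (IndexSet m n → ℝ) :=
  {w | ∃ (k : ℕ) (a : Fin k → ℝ) (x : Fin k → (Fin n → ℝ)),
    (∀ i, 0 ≤ a i) ∧ w = ∑ i, a i • vMap m n (x i)}

/-!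
If `A` were not interior to the cone, a nonzero functional `f` would support the cone at `A`
(the cone is convex and full-dimensional): `f (v x) ≤ 0` for all `x` and
`0 ≤ f A`. With `ℓ α = f (Pi.single α 1)` and `t = e^{2x}`, the first says that the polynomial
`P t = ∑ ℓ α t^α` is nonpositive on the open positive orthant, the second that
`∑ ℓ α α! (m - |α|)! ≥ 0`. These numbers are the integrals of the degree-`m` homogenization
`y ↦ y_n^m P (y₀ / y_n, …, y_{n-1} / y_n)` of `P` against `e^{-∑ yᵢ}` over the positive orthant
of `ℝⁿ⁺¹`, so the homogenization vanishes there and `P = 0` on the orthant. A polynomial vanishing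
on the orthant has zero coefficients (it vanishes on the grid `{1, …, m+1}ⁿ`), so `ℓ = 0` and
`f = 0`. The same fact shows that the `v x` span `ℝᴺ`, which makes the cone full-dimensional.
-/

open Finset MeasureTheory Set

lemma nonpos_of_forall_nonneg_mul_le {𝕜 : Type*} [Field 𝕜] [LinearOrder 𝕜] [IsStrictOrderedRing 𝕜]
    {a b : 𝕜} (h : ∀ c : 𝕜, 0 ≤ c → c * a ≤ b) : a ≤ 0 := by
  by_contra! ha
  have := h ((|b| + 1) / a) (by positivity)
  rw [div_mul_cancel₀ _ ha.ne'] at this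
  linarith [le_abs_self b]

lemma integral_Ioi_pow_mul_exp_neg (k : ℕ) :
    ∫ x in Ioi (0 : ℝ), x ^ k * exp (-x) = k.factorial := by
  rw [← Real.Gamma_nat_eq_factorial, Real.Gamma_eq_integral (by positivity)]
  refine setIntegral_congr_fun measurableSet_Ioi fun x _ => ?_
  simp [mul_comm]

lemma integrableOn_Ioi_pow_mul_exp_neg (k : ℕ) :
    IntegrableOn (fun x : ℝ => x ^ k * exp (-x)) (Ioi 0) := by
  simpa [mul_comm] using Real.GammaIntegral_convergent (s := (k : ℝ) + 1) (by positivity)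

lemma integrableOn_pi_Ioi_prod_pow_mul_exp_neg {ι : Type*} [Fintype ι] (k : ι → ℕ) :
    IntegrableOn (fun y : ι → ℝ => ∏ i, y i ^ k i * exp (-y i)) (univ.pi fun _ => Ioi 0) := by
  rw [IntegrableOn, volume_pi, Measure.restrict_pi_pi]
  exact Integrable.fintype_prod_dep fun i => integrableOn_Ioi_pow_mul_exp_neg (k i)

lemma integral_pi_Ioi_prod_pow_mul_exp_neg {ι : Type*} [Fintype ι] (k : ι → ℕ) :
    ∫ y in univ.pi (fun _ => Ioi (0 : ℝ)), ∏ i, y i ^ k i * exp (-y i) =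
      ∏ i, ((k i).factorial : ℝ) := by
  rw [volume_pi, Measure.restrict_pi_pi,
    integral_fintype_prod_eq_prod (f := fun i x => x ^ k i * exp (-x))]
  exact prod_congr rfl fun i _ => integral_Ioi_pow_mul_exp_neg (k i)

lemma eqOn_zero_of_nonpos_of_setIntegral_nonneg {X : Type*} [TopologicalSpace X]
    [MeasurableSpace X] [OpensMeasurableSpace X] {μ : Measure X} [μ.IsOpenPosMeasure]
    {f : X → ℝ} {U : Set X} (hU : IsOpen U) (hf : ContinuousOn f U) (hfi : IntegrableOn f U μ)
    (hle : ∀ x ∈ U, f x ≤ 0) (hint : 0 ≤ ∫ x in U, f x ∂μ) : EqOn f 0 U := by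
  have hzero : ∫ x in U, -f x ∂μ = 0 := by
    rw [integral_neg, setIntegral_nonpos hU.measurableSet hle |>.antisymm hint, neg_zero]
  have hae : -f =ᵐ[μ.restrict U] 0 :=
    (integral_eq_zero_iff_of_nonneg_ae ((ae_restrict_iff' hU.measurableSet).2
      (ae_of_all _ fun x hx => neg_nonneg.2 (hle x hx))) hfi.neg).1 hzero
  refine Measure.eqOn_open_of_ae_eq (μ := μ) ?_ hU hf continuousOn_const
  filter_upwards [hae] with x hx
  simpa using hx

namespace IndexSet

variable {m n : ℕ}

instance : DecidableEq (IndexSet m n) :=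
  inferInstanceAs (DecidableEq {α : Fin n → ℕ // ∑ j, α j ≤ m})

lemma apply_le (α : IndexSet m n) (j : Fin n) : α.1 j ≤ m :=
  (single_le_sum (fun _ _ => Nat.zero_le _) (mem_univ j)).trans α.2

instance : Finite (IndexSet m n) :=
  Finite.of_injective (fun α j => (⟨α.1 j, Nat.lt_succ_of_le (α.apply_le j)⟩ : Fin (m + 1)))
    fun _ _ h => Subtype.ext <| funext fun j => congrArg Fin.val (congrFun h j)

noncomputable instance : Fintype (IndexSet m n) := Fintype.ofFinite _

noncomputable def poly (ℓ : IndexSet m n → ℝ) (t : Fin n → ℝ) : ℝ :=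
  ∑ α, ℓ α * ∏ j, t j ^ α.1 j

noncomputable def toMvPolynomial (ℓ : IndexSet m n → ℝ) : MvPolynomial (Fin n) ℝ :=
  ∑ α, MvPolynomial.monomial (Finsupp.equivFunOnFinite.symm α.1) (ℓ α)

lemma eval_toMvPolynomial (ℓ : IndexSet m n → ℝ) (t : Fin n → ℝ) :
    MvPolynomial.eval t (toMvPolynomial ℓ) = poly ℓ t := by
  simp [toMvPolynomial, poly, MvPolynomial.eval_monomial, Finsupp.prod_fintype]

lemma coeff_toMvPolynomial (ℓ : IndexSet m n → ℝ) (α : IndexSet m n) :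
    (toMvPolynomial ℓ).coeff (Finsupp.equivFunOnFinite.symm α.1) = ℓ α := by
  rw [toMvPolynomial, MvPolynomial.coeff_sum, Finset.sum_eq_single α]
  · simp
  · intro β _ hβ
    rw [MvPolynomial.coeff_monomial, if_neg]
    exact fun h => hβ (Subtype.ext (by simpa using h))
  · simp

lemma degreeOf_toMvPolynomial_le (ℓ : IndexSet m n → ℝ) (j : Fin n) :
    (toMvPolynomial ℓ).degreeOf j ≤ m := by
  classical
  rw [MvPolynomial.degreeOf_le_iff]
  intro s hs
  obtain ⟨α, -, hα⟩ := Finset.mem_biUnion.1 (MvPolynomial.support_sum hs)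
  rw [Finset.mem_singleton.1 (MvPolynomial.support_monomial_subset hα)]
  exact α.apply_le j

lemma eq_zero_of_poly_eq_zero {ℓ : IndexSet m n → ℝ}
    (h : ∀ t : Fin n → ℝ, (∀ j, 0 < t j) → poly ℓ t = 0) : ℓ = 0 := by
  set S : Finset ℝ := (range (m + 1)).image fun k : ℕ => (k : ℝ) + 1
  have hS : S.card = m + 1 :=
    (Finset.card_image_of_injective _ fun a b hab => by simpa using hab).trans (card_range _)
  have hP : toMvPolynomial ℓ = 0 := by
    refine MvPolynomial.eq_zero_of_eval_zero_at_prod_finset _ (fun _ => S)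
      (fun j => hS ▸ Nat.lt_succ_of_le (degreeOf_toMvPolynomial_le ℓ j)) fun t ht => ?_
    rw [eval_toMvPolynomial]
    refine h t fun j => ?_
    obtain ⟨k, -, hk⟩ := mem_image.1 (ht j)
    rw [← hk]
    positivity
  funext α
  rw [← coeff_toMvPolynomial ℓ α, hP, MvPolynomial.coeff_zero, Pi.zero_apply]

def homExponent (α : IndexSet m n) : Fin (n + 1) → ℕ := Fin.snoc α.1 (m - ∑ j, α.1 j)

noncomputable def homPoly (ℓ : IndexSet m n → ℝ) (y : Fin (n + 1) → ℝ) : ℝ :=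
  ∑ α, ℓ α * ∏ i, y i ^ α.homExponent i

lemma homPoly_snoc_one (ℓ : IndexSet m n → ℝ) (t : Fin n → ℝ) :
    homPoly ℓ (Fin.snoc t 1) = poly ℓ t := by
  simp [homPoly, poly, homExponent, Fin.prod_univ_castSucc]

lemma homPoly_eq_pow_mul_poly (ℓ : IndexSet m n → ℝ) {y : Fin (n + 1) → ℝ}
    (hy : y (Fin.last n) ≠ 0) :
    homPoly ℓ y = y (Fin.last n) ^ m * poly ℓ fun j => y j.castSucc / y (Fin.last n) := by
  rw [homPoly, poly, mul_sum]
  refine sum_congr rfl fun α _ => ?_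
  rw [Fin.prod_univ_castSucc]
  simp only [homExponent, Fin.snoc_castSucc, Fin.snoc_last, div_pow, prod_div_distrib,
    prod_pow_eq_pow_sum, pow_sub₀ _ hy α.2]
  field_simp

lemma continuous_homPoly (ℓ : IndexSet m n → ℝ) : Continuous (homPoly ℓ) := by
  unfold homPoly; fun_prop

lemma integrableOn_homPoly_mul_exp (ℓ : IndexSet m n → ℝ) :
    IntegrableOn (fun y => homPoly ℓ y * ∏ i, exp (-y i)) (univ.pi fun _ => Ioi (0 : ℝ)) := by
  simp only [homPoly, sum_mul, mul_assoc, ← prod_mul_distrib]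
  exact integrable_finsetSum _ fun α _ =>
    (integrableOn_pi_Ioi_prod_pow_mul_exp_neg α.homExponent).const_mul (ℓ α)

lemma integral_homPoly_mul_exp (ℓ : IndexSet m n → ℝ) :
    ∫ y in univ.pi (fun _ => Ioi (0 : ℝ)), homPoly ℓ y * ∏ i, exp (-y i) =
      ∑ α, ℓ α * ((∏ j, ((α.1 j).factorial : ℝ)) * ((m - ∑ j, α.1 j).factorial : ℝ)) := by
  simp only [homPoly, sum_mul, mul_assoc, ← prod_mul_distrib]
  rw [integral_finsetSum _ fun α _ =>
    (integrableOn_pi_Ioi_prod_pow_mul_exp_neg α.homExponent).const_mul (ℓ α)]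
  refine sum_congr rfl fun α _ => ?_
  rw [integral_const_mul, integral_pi_Ioi_prod_pow_mul_exp_neg, Fin.prod_univ_castSucc]
  simp [homExponent]

theorem eq_zero_of_poly_nonpos_of_moments_nonneg {ℓ : IndexSet m n → ℝ}
    (hP : ∀ t : Fin n → ℝ, (∀ j, 0 < t j) → poly ℓ t ≤ 0)
    (hM : 0 ≤ ∑ α, ℓ α * ((∏ j, ((α.1 j).factorial : ℝ)) * ((m - ∑ j, α.1 j).factorial : ℝ))) :
    ℓ = 0 := by
  set U := univ.pi fun _ : Fin (n + 1) => Ioi (0 : ℝ)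
  have hU : IsOpen U := isOpen_set_pi finite_univ fun _ _ => isOpen_Ioi
  have hvanish : EqOn (fun y => homPoly ℓ y * ∏ i, exp (-y i)) 0 U := by
    refine eqOn_zero_of_nonpos_of_setIntegral_nonneg hU
      ((continuous_homPoly ℓ).mul (by fun_prop)).continuousOn
      (integrableOn_homPoly_mul_exp ℓ) (fun y hy => ?_) (integral_homPoly_mul_exp ℓ ▸ hM)
    have hlast : 0 < y (Fin.last n) := hy _ (mem_univ _)
    rw [homPoly_eq_pow_mul_poly ℓ hlast.ne']
    refine mul_nonpos_of_nonpos_of_nonneg (mul_nonpos_of_nonneg_of_nonpos (by positivity)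
      (hP _ fun j => div_pos (hy _ (mem_univ _)) hlast)) (by positivity)
  refine eq_zero_of_poly_eq_zero fun t ht => ?_
  have hsnoc : (Fin.snoc t 1 : Fin (n + 1) → ℝ) ∈ U := fun i _ =>
    Fin.lastCases (by simp) (fun j => by simp [ht j]) i
  have := hvanish hsnoc
  simp only [homPoly_snoc_one, Pi.zero_apply] at this
  exact (mul_eq_zero.1 this).resolve_right (prod_ne_zero_iff.2 fun i _ => exp_ne_zero _)

end IndexSet

section Cone

variable {m n : ℕ}

lemma zero_mem_coneV : (0 : IndexSet m n → ℝ) ∈ coneV m n :=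
  ⟨0, Fin.elim0, Fin.elim0, fun i => i.elim0, by simp⟩

lemma add_mem_coneV {w₁ w₂ : IndexSet m n → ℝ} (h₁ : w₁ ∈ coneV m n) (h₂ : w₂ ∈ coneV m n) :
    w₁ + w₂ ∈ coneV m n := by
  obtain ⟨k₁, a₁, x₁, ha₁, rfl⟩ := h₁
  obtain ⟨k₂, a₂, x₂, ha₂, rfl⟩ := h₂
  refine ⟨k₁ + k₂, Fin.append a₁ a₂, Fin.append x₁ x₂,
    fun i => Fin.addCases (by simpa using ha₁ ·) (by simpa using ha₂ ·) i, ?_⟩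
  simp [Fin.sum_univ_add]

lemma smul_mem_coneV {c : ℝ} (hc : 0 ≤ c) {w : IndexSet m n → ℝ} (h : w ∈ coneV m n) :
    c • w ∈ coneV m n := by
  obtain ⟨k, a, x, ha, rfl⟩ := h
  exact ⟨k, fun i => c * a i, x, fun i => mul_nonneg hc (ha i), by simp [smul_sum, smul_smul]⟩

lemma vMap_mem_coneV (x : Fin n → ℝ) : vMap m n x ∈ coneV m n :=
  ⟨1, fun _ => 1, fun _ => x, fun _ => zero_le_one, by simp⟩

lemma convex_coneV : Convex ℝ (coneV m n) :=
  fun _ h₁ _ h₂ _ _ ha hb _ => add_mem_coneV (smul_mem_coneV ha h₁) (smul_mem_coneV hb h₂)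

end Cone

namespace LinearMap

variable {R ι : Type*} [CommSemiring R] [Fintype ι] [DecidableEq ι] (f : (ι → R) →ₗ[R] R)

lemma apply_eq_sum_mul_apply_single (w : ι → R) : f w = ∑ i, w i * f (Pi.single i 1) := by
  rw [pi_apply_eq_sum_univ]
  refine sum_congr rfl fun i _ => ?_
  rw [smul_eq_mul]
  congr 2
  funext j
  simp [Pi.single_apply, eq_comm]

lemma eq_zero_of_apply_single_one_eq_zero (h : ∀ i, f (Pi.single i 1) = 0) : f = 0 :=
  ext fun w => by simp [f.apply_eq_sum_mul_apply_single w, h]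

end LinearMap

section Dual

variable {m n : ℕ}

lemma vMap_log_half_apply {t : Fin n → ℝ} (ht : ∀ j, 0 < t j) (α : IndexSet m n) :
    vMap m n (fun j => log (t j) / 2) α = ∏ j, t j ^ (α.1 j + 1) := by
  rw [vMap, mul_sum, exp_sum]
  refine prod_congr rfl fun j _ => ?_
  rw [← rpow_natCast, rpow_def_of_pos (ht j)]
  push_cast
  ring_nf

variable (f : (IndexSet m n → ℝ) →ₗ[ℝ] ℝ)

lemma apply_vMap_log_half {t : Fin n → ℝ} (ht : ∀ j, 0 < t j) :
    f (vMap m n fun j => log (t j) / 2) =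
      (∏ j, t j) * IndexSet.poly (fun α => f (Pi.single α 1)) t := by
  rw [f.apply_eq_sum_mul_apply_single]
  simp only [vMap_log_half_apply ht, IndexSet.poly, mul_sum, pow_succ, prod_mul_distrib]
  exact sum_congr rfl fun α _ => by ring

lemma apply_AVec : f (AVec m n) = 1 / ((2 * π) ^ n * m.factorial) *
    ∑ α, f (Pi.single α 1) *
      ((∏ j, ((α.1 j).factorial : ℝ)) * ((m - ∑ j, α.1 j).factorial : ℝ)) := by
  rw [f.apply_eq_sum_mul_apply_single, mul_sum]
  refine sum_congr rfl fun α _ => ?_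
  rw [AVec]
  field_simp

end Dual

lemma span_range_vMap (m n : ℕ) : Submodule.span ℝ (range (vMap m n)) = ⊤ := by
  by_contra h
  obtain ⟨f, hf0, hf⟩ :=
    Submodule.exists_dual_map_eq_bot_of_lt_top (lt_top_iff_ne_top.2 h) inferInstance
  refine hf0 (f.eq_zero_of_apply_single_one_eq_zero
    (congrFun (IndexSet.eq_zero_of_poly_eq_zero fun t ht => ?_)))
  have hvanish :
      f (vMap m n fun j => log (t j) / 2) ∈ (Submodule.span ℝ (range (vMap m n))).map f :=
    Submodule.mem_map_of_mem (Submodule.subset_span (mem_range_self _))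
  rw [hf, Submodule.mem_bot, apply_vMap_log_half f ht] at hvanish
  exact (mul_eq_zero.1 hvanish).resolve_left (prod_pos fun j _ => ht j).ne'

lemma interior_coneV_nonempty (m n : ℕ) : (interior (coneV m n)).Nonempty := by
  have hspan : affineSpan ℝ (insert 0 (range (vMap m n))) = ⊤ :=
    SetLike.coe_injective (by rw [affineSpan_insert_zero, span_range_vMap]; rfl)
  refine (interior_convexHull_nonempty_iff_affineSpan_eq_top.2 hspan).mono (interior_mono ?_)
  exact convexHull_min (insert_subset zero_mem_coneV (range_subset_iff.2 vMap_mem_coneV))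
    convex_coneV

theorem stmt3_general (m n : ℕ) :
    AVec m n ∈ interior (coneV m n) := by
  by_contra hA
  obtain ⟨f, u, hf0, hfK, hfA⟩ := geometric_hahn_banach_of_nonempty_interior convex_coneV
    (convex_singleton (AVec m n)) (disjoint_singleton_right.2 hA) (interior_coneV_nonempty m n)
    (singleton_nonempty _)
  have hu : 0 ≤ u := by simpa using hfK 0 zero_mem_coneV
  have hv (x : Fin n → ℝ) : f (vMap m n x) ≤ 0 := nonpos_of_forall_nonneg_mul_le fun c hc => by
    simpa using hfK _ (smul_mem_coneV hc (vMap_mem_coneV x))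
  have hcoeff : (fun α => f (Pi.single α 1)) = 0 := by
    refine IndexSet.eq_zero_of_poly_nonpos_of_moments_nonneg (fun t ht => ?_) ?_
    · have := hv fun j => log (t j) / 2
      rw [← ContinuousLinearMap.coe_coe, apply_vMap_log_half _ ht] at this
      exact nonpos_of_mul_nonpos_right this (prod_pos fun j _ => ht j)
    · have := hu.trans (hfA _ rfl)
      rw [← ContinuousLinearMap.coe_coe, apply_AVec] at this
      exact nonneg_of_mul_nonneg_right this (by positivity)
  exact hf0 (ContinuousLinearMap.coe_injective
    (LinearMap.eq_zero_of_apply_single_one_eq_zero _ (congrFun hcoeff)))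

/-- The vector `A` lies in the interior of the cone `K_v` generated by
`{v(x) : x ∈ ℝⁿ}` in `ℝᴺ` (with `N = #𝓘_m`, coordinates indexed by `𝓘_m`). -/
theorem stmt3 (m n : ℕ) (hm : 0 < m) (hn : 0 < n) :
    AVec m n ∈ interior (coneV m n) :=
  stmt3_general m n
end

section
/- Let N be a positive integer, S ⊆ ℝᴺ, and K_S = cone(S). If B lies in the interior of K_S, then there exist a positive integer M, vectors y₁,…,y_M ∈ S, and positive real numbers a₁,…,a_M > 0 such that B = Σ_{j=1}^M aⱼ yⱼ and the vectors y₁,…,y_M span ℝᴺ (in particular M ≥ N). -/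
/-!
Since `cone(S) ⊆ span S` and a proper subspace has empty interior, `S` spans `ℝᴺ`, so `S`
contains a basis `v₁, …, v_N`. As `B` is interior, `B - ε (v₁ + ⋯ + v_N)` still lies in the
cone for some `ε > 0`; writing it as a combination of elements of `S`, dropping the zero
coefficients and adding back `ε v₁ + ⋯ + ε v_N` gives a strictly positive combination whose
vectors include the basis.
-/

/-- The cone generated by a subset `S ⊆ ℝᴺ`: all finite nonnegative combinations of
elements of `S`. -/
def coneOf (N : ℕ) (S : Set (EuclideanSpace ℝ (Fin N))) : Set (EuclideanSpace ℝ (Fin N)) :=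
  {w | ∃ (k : ℕ) (a : Fin k → ℝ) (y : Fin k → EuclideanSpace ℝ (Fin N)),
    (∀ i, 0 ≤ a i) ∧ (∀ i, y i ∈ S) ∧ w = ∑ i, a i • y i}

open Filter Topology Submodule

theorem exists_pos_sub_smul_mem_of_mem_interior {E : Type*} [AddCommGroup E] [Module ℝ E]
    [TopologicalSpace E] [IsTopologicalAddGroup E] [ContinuousSMul ℝ E] {C : Set E} {x : E}
    (hx : x ∈ interior C) (w : E) : ∃ ε : ℝ, 0 < ε ∧ x - ε • w ∈ C := by
  have hlim : Tendsto (fun ε : ℝ => x - ε • w) (𝓝[>] 0) (𝓝 x) := by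
    have hcont : Continuous fun ε : ℝ => x - ε • w := by fun_prop
    simpa using (hcont.tendsto 0).mono_left nhdsWithin_le_nhds
  obtain ⟨ε, hεC, hε⟩ :=
    ((hlim.eventually (mem_interior_iff_mem_nhds.mp hx)).and self_mem_nhdsWithin).exists
  exact ⟨ε, hε, hεC⟩

section PositiveCombination

variable {E : Type*} [AddCommGroup E] [Module ℝ E] {S : Set E}

theorem exists_pos_sum_smul_eq_of_nonneg :
    ∀ {k : ℕ} (a : Fin k → ℝ) (y : Fin k → E), (∀ i, 0 ≤ a i) → (∀ i, y i ∈ S) →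
      ∃ (m : ℕ) (b : Fin m → ℝ) (z : Fin m → E),
        (∀ j, 0 < b j) ∧ (∀ j, z j ∈ S) ∧ ∑ j, b j • z j = ∑ i, a i • y i
  | 0, _, _, _, _ => ⟨0, Fin.elim0, Fin.elim0, nofun, nofun, by simp⟩
  | k + 1, a, y, ha, hy => by
    obtain ⟨m, b, z, hb, hz, hsum⟩ := exists_pos_sum_smul_eq_of_nonneg
      (fun i => a i.succ) (fun i => y i.succ) (fun _ => ha _) (fun _ => hy _)
    rw [Fin.sum_univ_succ, ← hsum]
    rcases (ha 0).eq_or_lt with h0 | h0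
    · exact ⟨m, b, z, hb, hz, by rw [← h0, zero_smul, zero_add]⟩
    · exact ⟨m + 1, Fin.cons (a 0) b, Fin.cons (y 0) z, Fin.cases h0 hb, Fin.cases (hy 0) hz,
        by simp [Fin.sum_univ_succ]⟩

theorem exists_pos_sum_smul_eq_add_smul_sum {m n : ℕ} {b : Fin m → ℝ} {z : Fin m → E}
    {v : Fin n → E} (hb : ∀ j, 0 < b j) (hz : ∀ j, z j ∈ S) (hv : ∀ i, v i ∈ S) {ε : ℝ}
    (hε : 0 < ε) :
    ∃ (M : ℕ) (y : Fin M → E) (a : Fin M → ℝ), (∀ j, y j ∈ S) ∧ (∀ j, 0 < a j) ∧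
      ∑ j, b j • z j + ε • ∑ i, v i = ∑ j, a j • y j ∧
      Set.range v ⊆ Set.range y := by
  refine ⟨m + n, Fin.append z v, Fin.append b fun _ => ε, Fin.addCases (by simpa) (by simpa),
    Fin.addCases (by simpa) (by simp [hε]), ?_, ?_⟩
  · simp [Fin.sum_univ_add, Finset.smul_sum]
  · rintro _ ⟨i, rfl⟩
    exact ⟨Fin.natAdd m i, Fin.append_right z v i⟩

end PositiveCombination

theorem coneOf_subset_span (N : ℕ) (S : Set (EuclideanSpace ℝ (Fin N))) :
    coneOf N S ⊆ span ℝ S := by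
  rintro w ⟨k, a, y, -, hy, rfl⟩
  exact sum_mem fun i _ => smul_mem _ _ (subset_span (hy i))

/-- If `B` lies in the interior of `cone(S)` for `S ⊆ ℝᴺ`, then `B` is a
finite *strictly positive* combination `B = Σⱼ aⱼ yⱼ` of vectors `yⱼ ∈ S` which span `ℝᴺ`
(in particular `M ≥ N`). -/
theorem stmt4 (N : ℕ) (hN : 0 < N) (S : Set (EuclideanSpace ℝ (Fin N)))
    (B : EuclideanSpace ℝ (Fin N)) (hB : B ∈ interior (coneOf N S)) :
    ∃ (M : ℕ) (y : Fin M → EuclideanSpace ℝ (Fin N)) (a : Fin M → ℝ),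
      0 < M ∧ N ≤ M ∧ (∀ j, y j ∈ S) ∧ (∀ j, 0 < a j) ∧
      B = ∑ j, a j • y j ∧
      Submodule.span ℝ (Set.range y) = ⊤ := by
  have hS : span ℝ S = ⊤ :=
    (span ℝ S).eq_top_of_nonempty_interior' ⟨B, interior_mono (coneOf_subset_span N S) hB⟩
  obtain ⟨v, hvS, hv, -⟩ := exists_fun_fin_finrank_span_eq ℝ S
  obtain ⟨ε, hε, k, c, x, hc, hx, hcone⟩ := exists_pos_sub_smul_mem_of_mem_interior hB (∑ i, v i)
  obtain ⟨m, b, z, hb, hz, hbz⟩ := exists_pos_sum_smul_eq_of_nonneg c x hc hx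
  obtain ⟨M, y, a, hy, ha, hsum, hvy⟩ := exists_pos_sum_smul_eq_add_smul_sum hb hz hvS hε
  have hspan : span ℝ (Set.range y) = ⊤ := top_le_iff.mp (hS ▸ hv ▸ span_mono hvy)
  have hNM : N ≤ M := by simpa using finrank_le_of_span_eq_top hspan
  refine ⟨M, y, a, hN.trans_le hNM, hNM, hy, ha, ?_, hspan⟩
  rw [← hsum, hbz, ← hcone, sub_add_cancel]
end

section
/- Let n ≥ 2 and N ≥ 2 be integers, let 0 < c < 1, 0 < μ < 1, and 0 < s₀ ≤ 1/N. Define T̃ = {x ∈ ℝⁿ : μ c s₀ < e^{2x₁} + ⋯ + e^{2xₙ} < c s₀}. Then for every multi-index α ∈ ℕⁿ, ∫_{T̃} e^{2⟨α+𝟏,x⟩} dx < c²/(2ⁿ N). -/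
open MeasureTheory Real

/-!
On `T̃` every `e^{2xⱼ}` is below `a = c s₀ ≤ 1`, so `T̃` lies in the orthant `{xⱼ ≤ log a / 2}`
of non-positive coordinates. There `e^{2⟨α+𝟏,x⟩} ≤ ∏ⱼ e^{2xⱼ}`, whose integral over the orthant
factorises as `(a/2)ⁿ`. Finally `(c s₀ / 2)ⁿ < c²/(2ⁿN)` because `n ≥ 2`, `c < 1` and `s₀ ≤ 1/N < 1`.
-/

open Set

section ExpIntegral

variable {ι : Type*} [Fintype ι]

lemma setIntegral_pi_Iic_prod_exp_two_mul (L : ℝ) :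
    ∫ x in univ.pi (fun _ : ι => Iic L), ∏ j, exp (2 * x j)
      = (exp (2 * L) / 2) ^ Fintype.card ι := by
  rw [volume_pi, Measure.restrict_pi_pi, integral_fintype_prod_eq_pow (fun t => exp (2 * t)),
    integral_exp_mul_Iic two_pos]

lemma setLIntegral_pi_Iic_prod_exp_two_mul (L : ℝ) :
    ∫⁻ x in univ.pi (fun _ : ι => Iic L), ENNReal.ofReal (∏ j, exp (2 * x j))
      = ENNReal.ofReal ((exp (2 * L) / 2) ^ Fintype.card ι) := by
  rw [← setIntegral_pi_Iic_prod_exp_two_mul, ofReal_integral_eq_lintegral_ofReal]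
  · rw [volume_pi, Measure.restrict_pi_pi]
    exact Integrable.fintype_prod fun _ => integrableOn_exp_mul_Iic two_pos L
  · exact Filter.Eventually.of_forall fun x => by positivity

lemma subset_pi_Iic_of_sum_exp_two_mul_lt {a : ℝ} (ha : 0 < a) :
    {x : ι → ℝ | ∑ j, exp (2 * x j) < a} ⊆ univ.pi (fun _ => Iic (log a / 2)) := by
  intro x hx j _
  have hj : exp (2 * x j) < a :=
    (Finset.single_le_sum (fun i _ => (exp_pos (2 * x i)).le) (Finset.mem_univ j)).trans_lt hx
  have := (lt_log_iff_exp_lt ha).2 hj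
  simp only [mem_Iic]
  linarith

lemma exp_two_mul_sum_le_prod_exp_two_mul {w x : ι → ℝ} (hw : ∀ j, 1 ≤ w j)
    (hx : ∀ j, x j ≤ 0) : exp (2 * ∑ j, w j * x j) ≤ ∏ j, exp (2 * x j) := by
  rw [← exp_sum, exp_le_exp, Finset.mul_sum]
  exact Finset.sum_le_sum fun j _ => by nlinarith [hw j, hx j]

theorem setLIntegral_exp_two_mul_sum_le {w : ι → ℝ} (hw : ∀ j, 1 ≤ w j) {a : ℝ}
    (ha₀ : 0 < a) (ha₁ : a ≤ 1) :
    ∫⁻ x in {x : ι → ℝ | ∑ j, exp (2 * x j) < a}, ENNReal.ofReal (exp (2 * ∑ j, w j * x j))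
      ≤ ENNReal.ofReal ((a / 2) ^ Fintype.card ι) := by
  have hL : log a / 2 ≤ 0 := by linarith [log_nonpos ha₀.le ha₁]
  calc _ ≤ ∫⁻ x in {x : ι → ℝ | ∑ j, exp (2 * x j) < a}, ENNReal.ofReal (∏ j, exp (2 * x j)) :=
        setLIntegral_mono (by fun_prop) fun x hx => ENNReal.ofReal_le_ofReal <|
          exp_two_mul_sum_le_prod_exp_two_mul hw fun j =>
            (subset_pi_Iic_of_sum_exp_two_mul_lt ha₀ hx j (mem_univ j)).trans hL
    _ ≤ ∫⁻ x in univ.pi (fun _ => Iic (log a / 2)), ENNReal.ofReal (∏ j, exp (2 * x j)) :=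
        lintegral_mono_set (subset_pi_Iic_of_sum_exp_two_mul_lt ha₀)
    _ = ENNReal.ofReal ((a / 2) ^ Fintype.card ι) := by
        rw [setLIntegral_pi_Iic_prod_exp_two_mul, mul_div_cancel₀ _ two_ne_zero, exp_log ha₀]

end ExpIntegral

lemma div_two_mul_pow_lt_sq_div {n N : ℕ} (hn : 2 ≤ n) (hN : 2 ≤ N) {c s : ℝ} (hc₀ : 0 < c)
    (hc₁ : c < 1) (hs₀ : 0 < s) (hs₁ : s ≤ 1 / N) :
    (c * s / 2) ^ n < c ^ 2 / (2 ^ n * N) := by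
  have hN₁ : (1 : ℝ) < N := by exact_mod_cast hN
  have hN₀ : (0 : ℝ) < N := by positivity
  have hs : s ^ n < 1 / N :=
    calc s ^ n ≤ s ^ 2 :=
          pow_le_pow_of_le_one hs₀.le (hs₁.trans (div_le_one_of_le₀ hN₁.le hN₀.le)) hn
      _ ≤ (1 / N) ^ 2 := pow_le_pow_left₀ hs₀.le hs₁ 2
      _ < 1 / N := by
        rw [sq]
        exact mul_lt_of_lt_one_left (by positivity) ((div_lt_one hN₀).2 hN₁)
  have hcs : c ^ n * s ^ n < c ^ 2 * (1 / N) :=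
    calc c ^ n * s ^ n ≤ c ^ 2 * s ^ n :=
          mul_le_mul_of_nonneg_right (pow_le_pow_of_le_one hc₀.le hc₁.le hn) (by positivity)
      _ < c ^ 2 * (1 / N) := by gcongr
  calc (c * s / 2) ^ n = c ^ n * s ^ n / 2 ^ n := by rw [div_pow, mul_pow]
    _ < c ^ 2 * (1 / N) / 2 ^ n := by gcongr
    _ = c ^ 2 / (2 ^ n * N) := by field_simp

theorem stmt7_general (n N : ℕ) (hn : 2 ≤ n) (hN : 2 ≤ N)
    (c μ s₀ : ℝ) (hc0 : 0 < c) (hc1 : c < 1)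
    (hs0 : 0 < s₀) (hs1 : s₀ ≤ 1 / N) (α : Fin n → ℕ) :
    (∫⁻ x in {x : Fin n → ℝ |
        μ * c * s₀ < ∑ j, Real.exp (2 * x j) ∧ ∑ j, Real.exp (2 * x j) < c * s₀},
      ENNReal.ofReal (Real.exp (2 * ∑ j, ((α j : ℝ) + 1) * x j)))
    < ENNReal.ofReal (c ^ 2 / (2 ^ n * N)) := by
  have hs₀ : s₀ ≤ 1 := hs1.trans (div_le_one_of_le₀ (by exact_mod_cast (by omega : 1 ≤ N))
    (Nat.cast_nonneg N))
  have hcs : c * s₀ ≤ 1 := mul_le_one₀ hc1.le hs0.le hs₀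
  calc _ ≤ ∫⁻ x in {x : Fin n → ℝ | ∑ j, exp (2 * x j) < c * s₀},
          ENNReal.ofReal (exp (2 * ∑ j, ((α j : ℝ) + 1) * x j)) :=
        lintegral_mono_set fun x hx => hx.2
    _ ≤ ENNReal.ofReal ((c * s₀ / 2) ^ Fintype.card (Fin n)) :=
        setLIntegral_exp_two_mul_sum_le (w := fun j => (α j : ℝ) + 1)
          (fun j => by simp) (mul_pos hc0 hs0) hcs
    _ < ENNReal.ofReal (c ^ 2 / (2 ^ n * N)) := by
        rw [Fintype.card_fin, ENNReal.ofReal_lt_ofReal_iff (by positivity)]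
        exact div_two_mul_pow_lt_sq_div hn hN hc0 hc1 hs0 hs1

/-- For `n, N ≥ 2`, `0 < c < 1`, `0 < μ < 1`, `0 < s₀ ≤ 1/N`, and
`T̃ = {x ∈ ℝⁿ : μcs₀ < Σⱼ e^{2xⱼ} < cs₀}`, every multi-index `α ∈ ℕⁿ` satisfies
`∫_{T̃} e^{2⟨α+𝟏,x⟩} dx < c²/(2ⁿN)`. -/
theorem stmt7 (n N : ℕ) (hn : 2 ≤ n) (hN : 2 ≤ N)
    (c μ s₀ : ℝ) (hc0 : 0 < c) (hc1 : c < 1) (hμ0 : 0 < μ) (hμ1 : μ < 1)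
    (hs0 : 0 < s₀) (hs1 : s₀ ≤ 1 / N) (α : Fin n → ℕ) :
    (∫⁻ x in {x : Fin n → ℝ |
        μ * c * s₀ < ∑ j, Real.exp (2 * x j) ∧ ∑ j, Real.exp (2 * x j) < c * s₀},
      ENNReal.ofReal (Real.exp (2 * ∑ j, ((α j : ℝ) + 1) * x j)))
    < ENNReal.ofReal (c ^ 2 / (2 ^ n * N)) :=
  stmt7_general n N hn hN c μ s₀ hc0 hc1 hs0 hs1 α
end

section
/- Let n ≥ 1 and let U be an (n+1)×(n+1) complex unitary matrix, written in block form U = [[A, b],[cᵀ, d]] with A an n×n matrix, b, c ∈ ℂⁿ and d ∈ ℂ. Define F(z) = (Az + b)/(⟨c,z⟩ + d) on the open set where ⟨c,z⟩ + d ≠ 0, with ⟨c,z⟩ = Σⱼ cⱼ zⱼ. Then for every z in this set, |det F′(z)|² = |⟨c,z⟩ + d|^{−2(n+1)}, where F′(z) is the complex Jacobian matrix of F at z. -/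
/-!
Write `w = ⟨c,z⟩ + d` and `u = Az + b`. The quotient rule gives the Jacobian
`F′(z) = w⁻¹ (A - w⁻¹ u cᵀ)`, and `A - w⁻¹ u cᵀ` is the Schur complement of `w` in the block
matrix `[[A, u], [cᵀ, w]] = U [[I, z], [0, 1]]`, whose determinant is `det U`. Hence
`det F′(z) = w^{-(n+1)} det U`, and `|det U| = 1` because `U` is unitary.
-/

open Matrix

section Jacobian

variable {𝕜 : Type*} [NontriviallyNormedField 𝕜] {m : Type*} [Fintype m] [DecidableEq m]

def linearFractionalJacobian (A : Matrix m m 𝕜) (b c : m → 𝕜) (d : 𝕜) (z : m → 𝕜) :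
    Matrix m m 𝕜 :=
  (c ⬝ᵥ z + d)⁻¹ • (A - (c ⬝ᵥ z + d)⁻¹ • vecMulVec (A *ᵥ z + b) c)

variable [CompleteSpace 𝕜]

theorem hasFDerivAt_mulVec_add_const (A : Matrix m m 𝕜) (b z : m → 𝕜) :
    HasFDerivAt (fun z => A *ᵥ z + b) (LinearMap.toContinuousLinearMap (toLin' A)) z := by
  simpa using ((LinearMap.toContinuousLinearMap (toLin' A)).hasFDerivAt (x := z)).add_const b

theorem hasFDerivAt_dotProduct_add_const (c z : m → 𝕜) (d : 𝕜) :
    HasFDerivAt (fun z => c ⬝ᵥ z + d)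
      (LinearMap.toContinuousLinearMap (dotProductEquiv 𝕜 m c)) z := by
  simpa using
    ((LinearMap.toContinuousLinearMap (dotProductEquiv 𝕜 m c)).hasFDerivAt (x := z)).add_const d

theorem hasFDerivAt_linearFractional (A : Matrix m m 𝕜) (b c : m → 𝕜) (d : 𝕜) {z : m → 𝕜}
    (hz : c ⬝ᵥ z + d ≠ 0) :
    HasFDerivAt (fun z => (c ⬝ᵥ z + d)⁻¹ • (A *ᵥ z + b))
      (LinearMap.toContinuousLinearMap (toLin' (linearFractionalJacobian A b c d z))) z := by
  refine (((hasFDerivAt_inv hz).comp z (hasFDerivAt_dotProduct_add_const c z d)).smul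
    (hasFDerivAt_mulVec_add_const A b z)).congr_fderiv ?_
  ext v : 1
  simp only [linearFractionalJacobian, map_smul, map_sub, _root_.sub_apply, toLin'_apply,
    vecMulVec_mulVec, op_smul_eq_smul, _root_.add_apply, _root_.smul_apply,
    LinearMap.coe_toContinuousLinearMap', ContinuousLinearMap.smulRight_apply,
    ContinuousLinearMap.comp_apply, ContinuousLinearMap.toSpanSingleton_apply,
    dotProductEquiv_apply_apply, Function.comp_apply, smul_eq_mul, ← inv_pow]
  module

end Jacobian

section Determinant

variable {K : Type*} [Field K] {m : Type*} [Fintype m] [DecidableEq m]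

theorem det_fromBlocks_replicateCol_replicateRow (A : Matrix m m K) (u c : m → K) {w : K}
    (hw : w ≠ 0) :
    (fromBlocks A (replicateCol (Fin 1) u) (replicateRow (Fin 1) c) (of fun _ _ => w)).det
      = w * (A - w⁻¹ • vecMulVec u c).det := by
  let : Invertible (of fun _ _ => w : Matrix (Fin 1) (Fin 1) K) :=
    invertibleOfRightInverse _ (of fun _ _ => w⁻¹)
      (by ext i j; rw [Subsingleton.elim i j]; simp [mul_apply, hw])
  have hinv : ⅟(of fun _ _ => w : Matrix (Fin 1) (Fin 1) K) = of fun _ _ => w⁻¹ := rfl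
  rw [det_fromBlocks₂₂, det_unique, hinv]
  congr 2
  ext i j
  simp only [Matrix.sub_apply, Matrix.smul_apply, mul_apply, Fin.sum_univ_one, replicateCol_apply,
    replicateRow_apply, of_apply, vecMulVec_apply, smul_eq_mul]
  ring

theorem det_fromBlocks_mulVec_add_replicateCol (A : Matrix m m K) (b c z : m → K) (d : K) :
    (fromBlocks A (replicateCol (Fin 1) (A *ᵥ z + b)) (replicateRow (Fin 1) c)
        (of fun _ _ => c ⬝ᵥ z + d)).det
      = (fromBlocks A (replicateCol (Fin 1) b) (replicateRow (Fin 1) c) (of fun _ _ => d)).det := by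
  have hmul : fromBlocks A (replicateCol (Fin 1) b) (replicateRow (Fin 1) c) (of fun _ _ => d) *
      fromBlocks 1 (replicateCol (Fin 1) z) 0 1
      = fromBlocks A (replicateCol (Fin 1) (A *ᵥ z + b)) (replicateRow (Fin 1) c)
        (of fun _ _ => c ⬝ᵥ z + d) := by
    rw [fromBlocks_multiply]
    ext (i | i) (j | j) <;> simp [mul_apply, mulVec, dotProduct]
  rw [← hmul, det_mul, det_fromBlocks_zero₂₁, det_one, det_one, mul_one, mul_one]

theorem det_linearFractionalJacobian {𝕜 : Type*} [NontriviallyNormedField 𝕜]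
    (A : Matrix m m 𝕜) (b c : m → 𝕜) (d : 𝕜) {z : m → 𝕜} (hz : c ⬝ᵥ z + d ≠ 0) :
    (linearFractionalJacobian A b c d z).det = (c ⬝ᵥ z + d)⁻¹ ^ (Fintype.card m + 1) *
      (fromBlocks A (replicateCol (Fin 1) b) (replicateRow (Fin 1) c) (of fun _ _ => d)).det := by
  rw [linearFractionalJacobian, det_smul, ← det_fromBlocks_mulVec_add_replicateCol A b c z d,
    det_fromBlocks_replicateCol_replicateRow _ _ _ hz, pow_succ, mul_assoc,
    inv_mul_cancel_left₀ hz]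

end Determinant

theorem det_eq_det_fromBlocks_castSucc_last {R : Type*} [CommRing R] {n : ℕ}
    (U : Matrix (Fin (n + 1)) (Fin (n + 1)) R) :
    U.det = (fromBlocks (of fun i j : Fin n => U i.castSucc j.castSucc)
      (replicateCol (Fin 1) fun i : Fin n => U i.castSucc (Fin.last n))
      (replicateRow (Fin 1) fun j : Fin n => U (Fin.last n) j.castSucc)
      (of fun _ _ => U (Fin.last n) (Fin.last n))).det := by
  rw [← det_submatrix_equiv_self finSumFinEquiv U]
  congr 1
  ext (i | i) (j | j) <;> simp [Fin.fin_one_eq_zero] <;> rfl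

theorem stmt13_general (n : ℕ)
    (U : Matrix (Fin (n + 1)) (Fin (n + 1)) ℂ)
    (hU : U ∈ Matrix.unitaryGroup (Fin (n + 1)) ℂ)
    (F : (Fin n → ℂ) → (Fin n → ℂ))
    (hFdef : ∀ z : Fin n → ℂ, ∀ i : Fin n,
      F z i = ((∑ j : Fin n, U i.castSucc j.castSucc * z j) + U i.castSucc (Fin.last n)) /
        ((∑ j : Fin n, U (Fin.last n) j.castSucc * z j) + U (Fin.last n) (Fin.last n)))
    (F' : (Fin n → ℂ) → Matrix (Fin n) (Fin n) ℂ)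
    (hF' : ∀ z : Fin n → ℂ,
      (∑ j : Fin n, U (Fin.last n) j.castSucc * z j) + U (Fin.last n) (Fin.last n) ≠ 0 →
      HasFDerivAt F (LinearMap.toContinuousLinearMap (Matrix.toLin' (F' z))) z)
    (z : Fin n → ℂ)
    (hz : (∑ j : Fin n, U (Fin.last n) j.castSucc * z j)
        + U (Fin.last n) (Fin.last n) ≠ 0) :
    ‖(F' z).det‖ ^ 2
      = ‖(∑ j : Fin n, U (Fin.last n) j.castSucc * z j)
            + U (Fin.last n) (Fin.last n)‖ ^ (-(2 * ((n : ℤ) + 1))) := by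
  set A : Matrix (Fin n) (Fin n) ℂ := of fun i j => U i.castSucc j.castSucc
  set b : Fin n → ℂ := fun i => U i.castSucc (Fin.last n)
  set c : Fin n → ℂ := fun j => U (Fin.last n) j.castSucc
  set d : ℂ := U (Fin.last n) (Fin.last n)
  change c ⬝ᵥ z + d ≠ 0 at hz
  change _ = ‖c ⬝ᵥ z + d‖ ^ _
  have hF : F = fun z => (c ⬝ᵥ z + d)⁻¹ • (A *ᵥ z + b) := by
    funext z i
    rw [hFdef, div_eq_inv_mul]
    rfl
  have hJ : F' z = linearFractionalJacobian A b c d z :=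
    toLin'.injective <| LinearMap.toContinuousLinearMap.injective <|
      (hF' z hz).unique (hF ▸ hasFDerivAt_linearFractional A b c d hz)
  have hdetU : ‖(fromBlocks A (replicateCol (Fin 1) b) (replicateRow (Fin 1) c)
      (of fun _ _ => d)).det‖ = 1 := by
    rw [← det_eq_det_fromBlocks_castSucc_last]
    exact CStarRing.norm_of_mem_unitary (det_of_mem_unitary hU)
  rw [hJ, det_linearFractionalJacobian A b c d hz, Fintype.card_fin, norm_mul, hdetU, mul_one,
    norm_pow, norm_inv, _root_.zpow_neg, ← pow_mul, inv_pow,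
    show 2 * ((n : ℤ) + 1) = ((n + 1) * 2 : ℕ) by push_cast; ring, zpow_natCast]

/-- For a unitary `(n+1)×(n+1)` matrix `U = [[A,b],[cᵀ,d]]` and the
Möbius map `F(z) = (Az+b)/(⟨c,z⟩+d)` defined where `⟨c,z⟩+d ≠ 0`, the complex Jacobian
satisfies `|det F′(z)|² = |⟨c,z⟩+d|^{−2(n+1)}`. -/
theorem stmt13 (n : ℕ) (hn : 1 ≤ n)
    (U : Matrix (Fin (n + 1)) (Fin (n + 1)) ℂ)
    (hU : U ∈ Matrix.unitaryGroup (Fin (n + 1)) ℂ)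
    (F : (Fin n → ℂ) → (Fin n → ℂ))
    (hFdef : ∀ z : Fin n → ℂ, ∀ i : Fin n,
      F z i = ((∑ j : Fin n, U i.castSucc j.castSucc * z j) + U i.castSucc (Fin.last n)) /
        ((∑ j : Fin n, U (Fin.last n) j.castSucc * z j) + U (Fin.last n) (Fin.last n)))
    (F' : (Fin n → ℂ) → Matrix (Fin n) (Fin n) ℂ)
    (hF' : ∀ z : Fin n → ℂ,
      (∑ j : Fin n, U (Fin.last n) j.castSucc * z j) + U (Fin.last n) (Fin.last n) ≠ 0 →
      HasFDerivAt F (LinearMap.toContinuousLinearMap (Matrix.toLin' (F' z))) z)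
    (z : Fin n → ℂ)
    (hz : (∑ j : Fin n, U (Fin.last n) j.castSucc * z j)
        + U (Fin.last n) (Fin.last n) ≠ 0) :
    ‖(F' z).det‖ ^ 2
      = ‖(∑ j : Fin n, U (Fin.last n) j.castSucc * z j)
            + U (Fin.last n) (Fin.last n)‖ ^ (-(2 * ((n : ℤ) + 1))) :=
  stmt13_general n U hU F hFdef F' hF' z hz
end

section
/- Let D₁, D₂ ⊆ ℂⁿ be bounded nonempty connected open sets and let λ > 0. Assume that for all multi-indices α, β ∈ ℕⁿ, ∫_{D₁} z^α · conj(z^β) dV_{2n}(z) = λ ∫_{D₂} z^α · conj(z^β) dV_{2n}(z). Then λ = 1 and the symmetric difference D₁ Δ D₂ has Lebesgue measure zero. -/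
/-!
Choose a compact set `K ⊇ D₁ ∪ D₂`. On `K` the monomials `z^α conj(z^β)` form a star-closed,
point-separating multiplicative family of bounded continuous functions, so by Stone–Weierstrass
the finite measures `volume|D₁` and `λ • volume|D₂` agree as soon as they agree on these
monomials, which is the hypothesis. Evaluating the identity `volume|D₁ = λ • volume|D₂` on
`D₁ \ D₂` and `D₂ \ D₁` shows that both are null; then `volume D₁ = volume D₂` is positive and
finite, and evaluating on `D₂` gives `λ = 1`.
-/

open MeasureTheory BoundedContinuousFunction ComplexConjugate
open scoped ENNReal

theorem ext_of_forall_mem_submonoid_integral_eq {E 𝕜 : Type*} [RCLike 𝕜] [MeasurableSpace E]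
    [TopologicalSpace E] [PolishSpace E] [BorelSpace E]
    {P P' : Measure E} [IsFiniteMeasure P] [IsFiniteMeasure P'] (M : Submonoid (E →ᵇ 𝕜))
    (hstar : ∀ g ∈ M, star g ∈ M) (hsep : ∀ x y, x ≠ y → ∃ g ∈ M, g x ≠ g y)
    (heq : ∀ g ∈ M, ∫ x, g x ∂P = ∫ x, g x ∂P') : P = P' := by
  -- a star-closed submonoid spans the star subalgebra it generates
  have hadjoin : ∀ g ∈ StarAlgebra.adjoin 𝕜 (M : Set (E →ᵇ 𝕜)), g ∈ Submodule.span 𝕜 M := by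
    intro g hg
    have hMstar : (M : Set (E →ᵇ 𝕜)) ∪ star (M : Set (E →ᵇ 𝕜)) = M :=
      Set.union_eq_left.2 fun g hg => by simpa using hstar _ hg
    rwa [← StarSubalgebra.mem_toSubalgebra, StarAlgebra.adjoin_toSubalgebra, hMstar,
      ← Subalgebra.mem_toSubmodule, Algebra.adjoin_eq_span, Submonoid.closure_eq] at hg
  have hspan : ∀ g ∈ Submodule.span 𝕜 (M : Set (E →ᵇ 𝕜)), ∫ x, g x ∂P = ∫ x, g x ∂P' := by
    intro g hg
    induction hg using Submodule.span_induction with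
    | mem g hg => exact heq g hg
    | zero => simp
    | add f g _ _ hf hg =>
      simp only [coe_add, Pi.add_apply]
      rw [integral_add (f.integrable P) (g.integrable P),
        integral_add (f.integrable P') (g.integrable P'), hf, hg]
    | smul c g _ hg => simp only [coe_smul, integral_smul, hg]
  refine ext_of_forall_mem_subalgebra_integral_eq_of_polish
    (A := StarAlgebra.adjoin 𝕜 (M : Set (E →ᵇ 𝕜))) ?_ fun g hg => hspan g (hadjoin g hg)
  intro x y hxy
  obtain ⟨g, hgM, hg⟩ := hsep x y hxy
  exact ⟨_, ⟨_, ⟨g, StarAlgebra.subset_adjoin 𝕜 _ hgM, rfl⟩, rfl⟩, hg⟩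

section ComplexMonomial

variable {ι : Type*} [Fintype ι]

def complexMonomial (α β : ι → ℕ) (z : ι → ℂ) : ℂ :=
  (∏ j, z j ^ α j) * conj (∏ j, z j ^ β j)

@[fun_prop]
theorem continuous_complexMonomial (α β : ι → ℕ) : Continuous (complexMonomial α β) := by
  unfold complexMonomial; fun_prop

theorem complexMonomial_zero (z : ι → ℂ) : complexMonomial 0 0 z = 1 := by
  simp [complexMonomial]

theorem complexMonomial_add (α β α' β' : ι → ℕ) (z : ι → ℂ) :
    complexMonomial (α + α') (β + β') z = complexMonomial α β z * complexMonomial α' β' z := by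
  simp only [complexMonomial, Pi.add_apply, pow_add, Finset.prod_mul_distrib, map_mul]
  ring

theorem conj_complexMonomial (α β : ι → ℕ) (z : ι → ℂ) :
    conj (complexMonomial α β z) = complexMonomial β α z := by
  simp only [complexMonomial, map_mul, Complex.conj_conj]
  ring

theorem complexMonomial_single [DecidableEq ι] (j : ι) (z : ι → ℂ) :
    complexMonomial (Pi.single j 1) 0 z = z j := by
  simp [complexMonomial, Pi.single_apply]

def monomialSubmonoid (K : Set (ι → ℂ)) : Submonoid (K →ᵇ ℂ) where
  carrier := {g | ∃ α β, ∀ w : K, g w = complexMonomial α β (w : ι → ℂ)}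
  one_mem' := ⟨0, 0, fun w => (complexMonomial_zero _).symm⟩
  mul_mem' := by
    rintro f g ⟨α, β, hf⟩ ⟨α', β', hg⟩
    exact ⟨α + α', β + β', fun w => by simp [hf, hg, complexMonomial_add]⟩

theorem mem_monomialSubmonoid {K : Set (ι → ℂ)} {g : K →ᵇ ℂ} :
    g ∈ monomialSubmonoid K ↔ ∃ α β, ∀ w : K, g w = complexMonomial α β (w : ι → ℂ) :=
  Iff.rfl

theorem Measure.ext_of_integral_complexMonomial_eq {μ ν : Measure (ι → ℂ)} [IsFiniteMeasure μ] [IsFiniteMeasure ν] {K : Set (ι → ℂ)}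
    (hK : IsCompact K) (hμ : ∀ᵐ z ∂μ, z ∈ K) (hν : ∀ᵐ z ∂ν, z ∈ K)
    (h : ∀ α β, ∫ z, complexMonomial α β z ∂μ = ∫ z, complexMonomial α β z ∂ν) : μ = ν := by
  classical
  have : CompactSpace K := isCompact_iff_compactSpace.mp hK
  have : PolishSpace K := hK.isClosed.polishSpace
  have hKm : MeasurableSet K := hK.isClosed.measurableSet
  have hcomap : ∀ ρ : Measure (ι → ℂ), (∀ᵐ z ∂ρ, z ∈ K) → ∀ α β,
      ∫ w : K, complexMonomial α β w ∂ρ.comap (↑) = ∫ z, complexMonomial α β z ∂ρ := by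
    intro ρ hρ α β
    rw [integral_subtype_comap hKm, Measure.restrict_eq_self_of_ae_mem hρ]
  have hKcomap : μ.comap ((↑) : K → ι → ℂ) = ν.comap (↑) := by
    refine ext_of_forall_mem_submonoid_integral_eq (monomialSubmonoid K) ?_ ?_ ?_
    · intro g hg
      obtain ⟨α, β, hg⟩ := mem_monomialSubmonoid.1 hg
      exact mem_monomialSubmonoid.2 ⟨β, α, fun w => by simp [hg, conj_complexMonomial]⟩
    · intro x y hxy
      obtain ⟨j, hj⟩ : ∃ j, (x : ι → ℂ) j ≠ (y : ι → ℂ) j := by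
        by_contra! h
        exact hxy (Subtype.ext (funext h))
      refine ⟨mkOfCompact ⟨fun w => complexMonomial (Pi.single j 1) 0 w, by fun_prop⟩,
        mem_monomialSubmonoid.2 ⟨_, _, fun w => rfl⟩, ?_⟩
      simpa [complexMonomial_single] using hj
    · intro g hg
      obtain ⟨α, β, hg⟩ := mem_monomialSubmonoid.1 hg
      simp only [hg, hcomap μ hμ, hcomap ν hν, h]
  have hrestrict : ∀ ρ : Measure (ι → ℂ), (∀ᵐ z ∂ρ, z ∈ K) →
      (ρ.comap (↑)).map ((↑) : K → ι → ℂ) = ρ := by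
    intro ρ hρ
    rw [(MeasurableEmbedding.subtype_coe hKm).map_comap, Subtype.range_coe,
      Measure.restrict_eq_self_of_ae_mem hρ]
  rw [← hrestrict μ hμ, ← hrestrict ν hν, hKcomap]

end ComplexMonomial

section RestrictEqSmul

variable {X : Type*} [MeasurableSpace X] {μ : Measure X} {s t : Set X} {c : ℝ≥0∞}

theorem ae_eq_set_of_restrict_eq_smul (hs : MeasurableSet s) (ht : MeasurableSet t) (hc : c ≠ 0)
    (h : μ.restrict s = c • μ.restrict t) : s =ᵐ[μ] t := by
  refine ae_eq_set.2 ⟨?_, ?_⟩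
  · calc μ (s \ t) = μ.restrict s (s \ t) := (Measure.restrict_eq_self μ Set.sdiff_subset).symm
      _ = c * μ.restrict t (s \ t) := by rw [h, Measure.smul_apply, smul_eq_mul]
      _ = 0 := by rw [Measure.restrict_apply (hs.diff ht), Set.sdiff_inter_self, measure_empty,
        mul_zero]
  · have hzero : c * μ (t \ s) = 0 := by
      calc c * μ (t \ s) = c * μ.restrict t (t \ s) := by
            rw [Measure.restrict_eq_self μ Set.sdiff_subset]
        _ = μ.restrict s (t \ s) := by rw [h, Measure.smul_apply, smul_eq_mul]
        _ = 0 := by rw [Measure.restrict_apply (ht.diff hs), Set.sdiff_inter_self, measure_empty]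
    exact (mul_eq_zero.1 hzero).resolve_left hc

theorem eq_one_of_restrict_eq_smul (hs : MeasurableSet s) (ht : MeasurableSet t) (hc : c ≠ 0)
    (ht₀ : μ t ≠ 0) (ht_top : μ t ≠ ∞) (h : μ.restrict s = c • μ.restrict t) : c = 1 := by
  have hμs : μ s = c * μ t := by
    simpa only [Measure.restrict_apply_univ, Measure.smul_apply, smul_eq_mul]
      using congrArg (fun ρ : Measure X => ρ Set.univ) h
  rw [measure_congr (ae_eq_set_of_restrict_eq_smul hs ht hc h)] at hμs
  exact ((ENNReal.mul_left_inj ht₀ ht_top).1 (by rw [one_mul, ← hμs])).symm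

end RestrictEqSmul

theorem stmt14_general (n : ℕ) (D₁ D₂ : Set (Fin n → ℂ))
    (h₂ : D₂.Nonempty) (ho₁ : IsOpen D₁) (ho₂ : IsOpen D₂)
    (hb₁ : Bornology.IsBounded D₁) (hb₂ : Bornology.IsBounded D₂)
    (lam : ℝ) (hlam : 0 < lam)
    (hmom : ∀ α β : Fin n → ℕ,
      (∫ z in D₁, (∏ j, z j ^ α j) * (starRingEnd ℂ) (∏ j, z j ^ β j))
        = (lam : ℂ) * ∫ z in D₂, (∏ j, z j ^ α j) * (starRingEnd ℂ) (∏ j, z j ^ β j)) :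
    lam = 1 ∧ volume ((D₁ \ D₂) ∪ (D₂ \ D₁)) = 0 := by
  obtain ⟨K, hK, hD₁K, hD₂K⟩ : ∃ K, IsCompact K ∧ D₁ ⊆ K ∧ D₂ ⊆ K :=
    ⟨_, (hb₁.union hb₂).isCompact_closure, Set.subset_union_left.trans subset_closure,
      Set.subset_union_right.trans subset_closure⟩
  have : IsFiniteMeasure (volume.restrict D₁) := isFiniteMeasure_restrict.2 hb₁.measure_lt_top.ne
  have : IsFiniteMeasure (volume.restrict D₂) := isFiniteMeasure_restrict.2 hb₂.measure_lt_top.ne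
  have := (volume.restrict D₂).smul_finite (ENNReal.ofReal_ne_top (r := lam))
  have hlam₀ : ENNReal.ofReal lam ≠ 0 := (ENNReal.ofReal_pos.2 hlam).ne'
  have hmeas : volume.restrict D₁ = ENNReal.ofReal lam • volume.restrict D₂ := by
    refine Measure.ext_of_integral_complexMonomial_eq hK
      (ae_restrict_of_forall_mem ho₁.measurableSet hD₁K)
      (Measure.ae_smul_measure (ae_restrict_of_forall_mem ho₂.measurableSet hD₂K) _) fun α β => ?_
    rw [integral_smul_measure, ENNReal.toReal_ofReal hlam.le, Complex.real_smul]
    exact hmom α β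
  refine ⟨ENNReal.ofReal_eq_one.1 (eq_one_of_restrict_eq_smul ho₁.measurableSet
    ho₂.measurableSet hlam₀ (ho₂.measure_ne_zero volume h₂) hb₂.measure_lt_top.ne hmeas), ?_⟩
  obtain ⟨hd₁, hd₂⟩ := ae_eq_set.1
    (ae_eq_set_of_restrict_eq_smul ho₁.measurableSet ho₂.measurableSet hlam₀ hmeas)
  exact measure_union_null hd₁ hd₂

/-- If two bounded nonempty connected open sets `D₁, D₂ ⊆ ℂⁿ` have all
their complex moments proportional with ratio `λ > 0`, i.e.
`∫_{D₁} z^α conj(z^β) dV = λ ∫_{D₂} z^α conj(z^β) dV` for all multi-indices `α, β`, then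
`λ = 1` and the symmetric difference `D₁ Δ D₂` has Lebesgue measure zero. -/
theorem stmt14 (n : ℕ) (hn : 0 < n) (D₁ D₂ : Set (Fin n → ℂ))
    (h₁ : D₁.Nonempty) (h₂ : D₂.Nonempty) (ho₁ : IsOpen D₁) (ho₂ : IsOpen D₂)
    (hc₁ : IsConnected D₁) (hc₂ : IsConnected D₂)
    (hb₁ : Bornology.IsBounded D₁) (hb₂ : Bornology.IsBounded D₂)
    (lam : ℝ) (hlam : 0 < lam)
    (hmom : ∀ α β : Fin n → ℕ,
      (∫ z in D₁, (∏ j, z j ^ α j) * (starRingEnd ℂ) (∏ j, z j ^ β j))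
        = (lam : ℂ) * ∫ z in D₂, (∏ j, z j ^ α j) * (starRingEnd ℂ) (∏ j, z j ^ β j)) :
    lam = 1 ∧ volume ((D₁ \ D₂) ∪ (D₂ \ D₁)) = 0 :=
  stmt14_general n D₁ D₂ h₂ ho₁ ho₂ hb₁ hb₂ lam hlam hmom
end

section
/- Let M ⊆ ℂⁿ be a nonempty connected open set admitting a holomorphic function g : M → ℂ with g ≢ 0 and ∫_M |g|² dV_{2n} < ∞. Let E ⊆ M be closed in M and assume E is Bergman negligible, i.e., for every holomorphic f : M∖E → ℂ with ∫_{M∖E} |f|² dV_{2n} < ∞ there exists a holomorphic F : M → ℂ with F = f on M∖E and ∫_M |F|² dV_{2n} = ∫_{M∖E} |f|² dV_{2n}. Then M∖E is open, dense in M, and connected; in particular E has empty interior. -/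
/-!
Everything rests on the identity theorem on the connected set `M`: a holomorphic function on `M`
is determined by its values on any nonempty open subset. Applying negligibility to `g` itself
gives an extension equal to `g`, so `∫_E |g|² = 0` and `g` vanishes on the interior of `E`.
Applying it to `1_u g`, for a separation `u, v` of `M \ E`, gives an extension vanishing on
`(M \ E) ∩ v`, hence everywhere, so `g` vanishes on `(M \ E) ∩ u`. Either way `g ≡ 0`.
-/

open MeasureTheory Metric Filter Set Topology

section IdentityTheorem

variable {V W : Type*} [NormedAddCommGroup V] [NormedSpace ℂ V]
  [NormedAddCommGroup W] [NormedSpace ℂ W] [CompleteSpace W]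

/-- Restricting to the complex line through `y` and `w` reduces this to the one-variable identity
theorem. -/
theorem DifferentiableOn.eqOn_zero_of_convex_of_eventuallyEq_zero {U : Set V} {F : V → W}
    (hF : DifferentiableOn ℂ F U) (hU : IsOpen U) (hUc : Convex ℝ U) {y : V} (hy : y ∈ U)
    (h0 : F =ᶠ[𝓝 y] 0) : EqOn F 0 U := by
  intro w hw
  set L : ℂ → V := fun t => y + t • (w - y)
  have hL : Differentiable ℂ L := (differentiable_id.smul_const (w - y)).const_add y
  have hLconvex : Convex ℝ (L ⁻¹' U) :=
    (hUc.translate_preimage_right y).is_linear_preimage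
      ((LinearMap.toSpanSingleton ℂ V (w - y)).restrictScalars ℝ).isLinear
  have hL0 : L 0 = y := by simp [L]
  have hFL : F ∘ L =ᶠ[𝓝 0] 0 := (hL.continuous.tendsto' 0 y hL0).eventually h0
  have := ((hF.comp hL.differentiableOn (mapsTo_preimage L U)).analyticOnNhd
    (hU.preimage hL.continuous)).eqOn_zero_of_preconnected_of_eventuallyEq_zero
    hLconvex.isPreconnected (by simpa [hL0] using hy) hFL (show L 1 ∈ U by simpa [L] using hw)
  simpa [L] using this

theorem DifferentiableOn.eqOn_zero_of_isPreconnected {M U : Set V} {F : V → W}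
    (hF : DifferentiableOn ℂ F M) (hM : IsOpen M) (hMc : IsPreconnected M) (hU : IsOpen U)
    (hUM : U ⊆ M) (hUne : U.Nonempty) (h0 : EqOn F 0 U) : EqOn F 0 M := by
  set S : Set V := {x | F =ᶠ[𝓝 x] 0}
  obtain ⟨z₀, hz₀⟩ := hUne
  have hMS : M ⊆ S := by
    refine hMc.subset_of_closure_inter_subset isOpen_setOfPred_eventually_nhds
      ⟨z₀, hUM hz₀, eventuallyEq_of_mem (hU.mem_nhds hz₀) h0⟩ ?_
    rintro x ⟨hxS, hxM⟩
    obtain ⟨r, hr, hball⟩ := Metric.isOpen_iff.1 hM x hxM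
    obtain ⟨y, hyS, hxy⟩ := Metric.mem_closure_iff.1 hxS r hr
    have := (hF.mono hball).eqOn_zero_of_convex_of_eventuallyEq_zero isOpen_ball
      (convex_ball x r) (mem_ball'.2 hxy) hyS
    exact eventuallyEq_of_mem (ball_mem_nhds x hr) this
  exact fun x hx => (hMS hx).self_of_nhds

end IdentityTheorem

theorem DifferentiableOn.indicator_of_isOpen {𝕜 V W : Type*} [NontriviallyNormedField 𝕜]
    [NormedAddCommGroup V] [NormedSpace 𝕜 V] [NormedAddCommGroup W] [NormedSpace 𝕜 W]
    {U u v : Set V} {g : V → W} (hg : DifferentiableOn 𝕜 g U) (hu : IsOpen u) (hv : IsOpen v)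
    (hUuv : U ⊆ u ∪ v) (hdisj : U ∩ (u ∩ v) = ∅) : DifferentiableOn 𝕜 (u.indicator g) U := by
  intro z hz
  rcases hUuv hz with hzu | hzv
  · refine (hg z hz).congr_of_eventuallyEq ?_ (indicator_of_mem hzu g)
    exact eventually_nhdsWithin_of_eventually_nhds
      (eventually_of_mem (hu.mem_nhds hzu) fun x hx => indicator_of_mem hx g)
  · refine (differentiableWithinAt_const (0 : W)).congr_of_eventuallyEq ?_ ?_
    · refine eventually_of_mem (inter_mem_nhdsWithin U (hv.mem_nhds hzv)) ?_
      rintro x ⟨hxU, hxv⟩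
      exact indicator_of_notMem (fun hxu => hdisj.subset ⟨hxU, hxu, hxv⟩) g
    · exact indicator_of_notMem (fun hzu => hdisj.subset ⟨hz, hzu, hzv⟩) g

theorem ContinuousOn.eqOn_zero_of_setLIntegral_sq_norm_eq_zero {X W : Type*}
    [TopologicalSpace X] [MeasurableSpace X] [OpensMeasurableSpace X] {μ : Measure X}
    [μ.IsOpenPosMeasure] [NormedAddCommGroup W] {U : Set X} {g : X → W} (hU : IsOpen U)
    (hg : ContinuousOn g U) (h : ∫⁻ z in U, ENNReal.ofReal (‖g z‖ ^ 2) ∂μ = 0) :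
    EqOn g 0 U := by
  have hae := (lintegral_eq_zero_iff'
    ((ENNReal.continuous_ofReal.comp_continuousOn (hg.norm.pow 2)).aemeasurable
      hU.measurableSet)).1 h
  refine Measure.eqOn_open_of_ae_eq (hae.mono fun z hz => ?_) hU hg continuousOn_const
  simpa using hz

theorem IsOpen.sdiff_of_relClosed {X : Type*} [TopologicalSpace X] {M E : Set X} (hM : IsOpen M)
    (hE : ∀ x ∈ M, x ∈ closure E → x ∈ E) : IsOpen (M \ E) := by
  have : M \ E = M \ closure E :=
    Subset.antisymm (fun x ⟨hxM, hxE⟩ => ⟨hxM, fun hx => hxE (hE x hxM hx)⟩)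
      (sdiff_subset_sdiff_right subset_closure)
  exact this ▸ hM.sdiff isClosed_closure

theorem IsOpen.subset_closure_sdiff {X : Type*} [TopologicalSpace X] {M E : Set X}
    (hM : IsOpen M) (hE : interior E = ∅) : M ⊆ closure (M \ E) := by
  have := hM.inter_closure (t := Eᶜ)
  rwa [closure_compl, hE, compl_empty, inter_univ, ← sdiff_eq] at this

section BergmanNegligible

variable {V : Type*} [NormedAddCommGroup V] [NormedSpace ℂ V] [MeasurableSpace V]

def IsBergmanNegligible (μ : Measure V) (M E : Set V) : Prop :=
  ∀ f : V → ℂ, DifferentiableOn ℂ f (M \ E) →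
    (∫⁻ z in M \ E, ENNReal.ofReal (‖f z‖ ^ 2) ∂μ) < ⊤ →
    ∃ F : V → ℂ, DifferentiableOn ℂ F M ∧ (∀ z ∈ M \ E, F z = f z) ∧
      (∫⁻ z in M, ENNReal.ofReal (‖F z‖ ^ 2) ∂μ) = ∫⁻ z in M \ E, ENNReal.ofReal (‖f z‖ ^ 2) ∂μ

variable {μ : Measure V} {M E : Set V} {g : V → ℂ}

theorem IsBergmanNegligible.interior_eq_empty [BorelSpace V] [μ.IsOpenPosMeasure]
    (hE : IsBergmanNegligible μ M E) (hM : IsOpen M) (hMc : IsPreconnected M)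
    (hg : DifferentiableOn ℂ g M) (hgne : ∃ z ∈ M, g z ≠ 0)
    (hgL2 : (∫⁻ z in M, ENNReal.ofReal (‖g z‖ ^ 2) ∂μ) < ⊤) (hEM : E ⊆ M)
    (hU : IsOpen (M \ E)) (hUne : (M \ E).Nonempty) : interior E = ∅ := by
  have hgL2U : (∫⁻ z in M \ E, ENNReal.ofReal (‖g z‖ ^ 2) ∂μ) < ⊤ :=
    (lintegral_mono_set sdiff_subset).trans_lt hgL2
  obtain ⟨F, hF, hFg, hFnorm⟩ := hE g (hg.mono sdiff_subset) hgL2U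
  have hFgM : EqOn F g M := fun z hz => sub_eq_zero.1 <|
    (hF.sub hg).eqOn_zero_of_isPreconnected hM hMc hU sdiff_subset hUne
      (fun z hz => sub_eq_zero.2 (hFg z hz)) hz
  have hEmeas : MeasurableSet E :=
    sdiff_sdiff_cancel_left hEM ▸ hM.measurableSet.diff hU.measurableSet
  have hgE : ∫⁻ z in E, ENNReal.ofReal (‖g z‖ ^ 2) ∂μ = 0 := by
    have hsplit :=
      lintegral_inter_add_sdiff (μ := μ) (fun z => ENNReal.ofReal (‖g z‖ ^ 2)) M hEmeas
    have hgM : ∫⁻ z in M, ENNReal.ofReal (‖g z‖ ^ 2) ∂μ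
        = ∫⁻ z in M \ E, ENNReal.ofReal (‖g z‖ ^ 2) ∂μ :=
      hFnorm ▸ setLIntegral_congr_fun hM.measurableSet fun z hz => by rw [hFgM hz]
    rw [inter_eq_right.2 hEM, hgM] at hsplit
    exact (ENNReal.add_left_inj hgL2U.ne).1 (hsplit.trans (zero_add _).symm)
  have hg0 : EqOn g 0 (interior E) :=
    (hg.continuousOn.mono (interior_subset.trans hEM)).eqOn_zero_of_setLIntegral_sq_norm_eq_zero
      isOpen_interior (nonpos_iff_eq_zero.1 ((lintegral_mono_set interior_subset).trans_eq hgE))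
  refine not_nonempty_iff_eq_empty.1 fun hint => ?_
  obtain ⟨z, hz, hgz⟩ := hgne
  exact hgz (hg.eqOn_zero_of_isPreconnected hM hMc isOpen_interior
    (interior_subset.trans hEM) hint hg0 hz)

theorem IsBergmanNegligible.isPreconnected_sdiff (hE : IsBergmanNegligible μ M E) (hM : IsOpen M)
    (hMc : IsPreconnected M) (hg : DifferentiableOn ℂ g M) (hgne : ∃ z ∈ M, g z ≠ 0)
    (hgL2 : (∫⁻ z in M, ENNReal.ofReal (‖g z‖ ^ 2) ∂μ) < ⊤) (hU : IsOpen (M \ E)) :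
    IsPreconnected (M \ E) := by
  intro u v hu hv hUuv ⟨z₁, hz₁U, hz₁u⟩ ⟨z₂, hz₂U, hz₂v⟩
  by_contra hdisj
  rw [not_nonempty_iff_eq_empty] at hdisj
  have hf := (hg.mono sdiff_subset).indicator_of_isOpen hu hv hUuv hdisj
  have hfL2 : (∫⁻ z in M \ E, ENNReal.ofReal (‖u.indicator g z‖ ^ 2) ∂μ) < ⊤ :=
    ((lintegral_mono fun z => ENNReal.ofReal_le_ofReal (pow_le_pow_left₀ (norm_nonneg _)
      (norm_indicator_le_norm_self g z) 2)).trans (lintegral_mono_set sdiff_subset)).trans_lt hgL2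
  obtain ⟨F, hF, hFf, -⟩ := hE _ hf hfL2
  have hF0 : EqOn F 0 M := by
    refine hF.eqOn_zero_of_isPreconnected hM hMc (hU.inter hv) (inter_subset_left.trans
      sdiff_subset) ⟨z₂, hz₂U, hz₂v⟩ fun z ⟨hzU, hzv⟩ => ?_
    rw [hFf z hzU]
    exact indicator_of_notMem (fun hzu => hdisj.subset ⟨hzU, hzu, hzv⟩) g
  have hg0 : EqOn g 0 ((M \ E) ∩ u) := fun z ⟨hzU, hzu⟩ => by
    rw [← indicator_of_mem hzu g, ← hFf z hzU, hF0 (sdiff_subset hzU)]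
  obtain ⟨z, hz, hgz⟩ := hgne
  exact hgz (hg.eqOn_zero_of_isPreconnected hM hMc (hU.inter hu)
    (inter_subset_left.trans sdiff_subset) ⟨z₁, hz₁U, hz₁u⟩ hg0 hz)

end BergmanNegligible

theorem stmt15_general (n : ℕ) (M E : Set (Fin n → ℂ))
    (hM : IsOpen M) (hMconn : IsConnected M)
    (g : (Fin n → ℂ) → ℂ) (hg : DifferentiableOn ℂ g M)
    (hgne : ∃ z ∈ M, g z ≠ 0)
    (hgL2 : (∫⁻ z in M, ENNReal.ofReal (‖g z‖ ^ 2)) < ⊤)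
    (hEM : E ⊆ M) (hEproper : E ≠ M)
    (hEclosed : ∀ x ∈ M, x ∈ closure E → x ∈ E)
    (hneglig : ∀ f : (Fin n → ℂ) → ℂ, DifferentiableOn ℂ f (M \ E) →
      (∫⁻ z in M \ E, ENNReal.ofReal (‖f z‖ ^ 2)) < ⊤ →
      ∃ F : (Fin n → ℂ) → ℂ, DifferentiableOn ℂ F M ∧ (∀ z ∈ M \ E, F z = f z) ∧
        (∫⁻ z in M, ENNReal.ofReal (‖F z‖ ^ 2))
          = ∫⁻ z in M \ E, ENNReal.ofReal (‖f z‖ ^ 2)) :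
    IsOpen (M \ E) ∧ M ⊆ closure (M \ E) ∧ IsConnected (M \ E) ∧ interior E = ∅ := by
  have hneg : IsBergmanNegligible volume M E := hneglig
  have hU : IsOpen (M \ E) := hM.sdiff_of_relClosed hEclosed
  have hUne : (M \ E).Nonempty := sdiff_nonempty.2 fun h => hEproper (hEM.antisymm h)
  have hint := hneg.interior_eq_empty hM hMconn.isPreconnected hg hgne hgL2 hEM hU hUne
  exact ⟨hU, hM.subset_closure_sdiff hint,
    ⟨hUne, hneg.isPreconnected_sdiff hM hMconn.isPreconnected hg hgne hgL2 hU⟩, hint⟩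

/-- Let `M ⊆ ℂⁿ` be a nonempty connected open set with a nontrivial
square-integrable holomorphic function, and let `E ⊊ M` be relatively closed in `M` and
Bergman negligible (every square-integrable holomorphic function on `M∖E` extends
holomorphically to `M` with the same `L²` norm). Then `M∖E` is open, dense in `M`, and
connected; in particular `E` has empty interior. -/
theorem stmt15 (n : ℕ) (hn : 0 < n) (M E : Set (Fin n → ℂ))
    (hM : IsOpen M) (hMne : M.Nonempty) (hMconn : IsConnected M)
    (g : (Fin n → ℂ) → ℂ) (hg : DifferentiableOn ℂ g M)
    (hgne : ∃ z ∈ M, g z ≠ 0)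
    (hgL2 : (∫⁻ z in M, ENNReal.ofReal (‖g z‖ ^ 2)) < ⊤)
    (hEM : E ⊆ M) (hEproper : E ≠ M)
    (hEclosed : ∀ x ∈ M, x ∈ closure E → x ∈ E)
    (hneglig : ∀ f : (Fin n → ℂ) → ℂ, DifferentiableOn ℂ f (M \ E) →
      (∫⁻ z in M \ E, ENNReal.ofReal (‖f z‖ ^ 2)) < ⊤ →
      ∃ F : (Fin n → ℂ) → ℂ, DifferentiableOn ℂ F M ∧ (∀ z ∈ M \ E, F z = f z) ∧
        (∫⁻ z in M, ENNReal.ofReal (‖F z‖ ^ 2))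
          = ∫⁻ z in M \ E, ENNReal.ofReal (‖f z‖ ^ 2)) :
    IsOpen (M \ E) ∧ M ⊆ closure (M \ E) ∧ IsConnected (M \ E) ∧ interior E = ∅ :=
  stmt15_general n M E hM hMconn g hg hgne hgL2 hEM hEproper hEclosed hneglig
end
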